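/- arXiv:math/0310121 — 2 statements merged into one kernel-verified Lean document; each statement's English description precedes it below -/
import Mathlib

section
/- Let P be a finite thin graded poset with a proper zipper (x,y,z). Then the zipped poset P' is thin, i.e., every rank-2 interval of P' has exactly two elements of intermediate rank. -/
/-- The underlying set of the zipped poset `P' = (P − {x,y,z}) ∪ {xy}`:
elements of `P` other than `x`, `y`, `z`, together with one new element `xy`
(represented by `Sum.inr ()`). -/
def ZipCarrier (α : Type*) (x y z : α) : Type _ :=
  {p : α // p ≠ x ∧ p ≠ y ∧ p ≠ z} ⊕ Unit

/-- The order relation `⪯` on the zipped poset: `a ⪯ b` if `a ≤ b` in `P`;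
`xy ⪯ a` if `x ≤ a` or `y ≤ a`; `a ⪯ xy` if `a ≤ x`; and `xy ⪯ xy`. -/
def zipLE {α : Type*} [PartialOrder α] (x y z : α) :
    ZipCarrier α x y z → ZipCarrier α x y z → Prop
  | .inl a, .inl b => a.val ≤ b.val
  | .inr _, .inl b => x ≤ b.val ∨ y ≤ b.val
  | .inl a, .inr _ => a.val ≤ x
  | .inr _, .inr _ => True

/-- `(x,y,z)` is a zipper in `P`: `z` covers `x` and `y` and covers no other element,
`z = x ∨ y` (the join), and the sets of elements strictly below `x` and `y` agree. -/
def IsZipper {α : Type*} [PartialOrder α] (x y z : α) : Prop :=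
  x ≠ y ∧ x ≠ z ∧ y ≠ z ∧
  (x ⋖ z) ∧ (y ⋖ z) ∧ (∀ w : α, w ⋖ z → w = x ∨ w = y) ∧
  IsLUB {x, y} z ∧
  (∀ a : α, a < x ↔ a < y)

open scoped Classical in
/-- `μ` is the Möbius function of the relation `r`:
`∑_{c : r a c ∧ r c b} μ(a,c) = δ_{a,b}` for all `a ≤ b`. -/
noncomputable def IsMoebius {α : Type*} (r : α → α → Prop) (μ : α → α → ℤ) : Prop :=
  ∀ a b : α, r a b →
    (∑ᶠ c ∈ {c : α | r a c ∧ r c b}, μ a c) = if a = b then 1 else 0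

/-- The rank function of the zipped poset: old elements keep their rank, and
the new element `xy` has the common rank of `x` and `y`. -/
def zipRank {α : Type*} (x y z : α) (rk : α → ℕ) : ZipCarrier α x y z → ℕ
  | .inl a => rk a.val
  | .inr _ => rk x

/-!
Each rank-2 open interval of the zipped poset is read off from rank-2 open intervals of `P`.
For old elements `a < b`, the interval `(a, b)` contains neither `z` nor both `x` and `y`
(either would give a chain of length 3 between ranks two apart), and `xy` takes the place of
whichever of `x`, `y` it does contain; here `D(x) = D(y)` makes `a ⪯ xy` symmetric in `x, y`.
The interval `(a, xy)` is `(a, x)`. The interval `(xy, b)` is `((x, b) ∪ (y, b)) \ {z}`: if `b`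
is above both `x` and `y`, then `z < b`, each of `(x, b)` and `(y, b)` is `z` plus one more
element, and these differ since an element above `x` and `y` is above `z = x ∨ y`; otherwise
only one of the two intervals is nonempty, and it avoids `z`.
-/

theorem Set.ncard_eq_ncard_preimage_inl_add_ncard_preimage_inr {β γ : Type*} [Finite β]
    [Finite γ] (S : Set (β ⊕ γ)) :
    S.ncard = (Sum.inl ⁻¹' S).ncard + (Sum.inr ⁻¹' S).ncard := by
  conv_lhs => rw [← Set.image_preimage_inl_union_image_preimage_inr S]
  rw [Set.ncard_union_eq Set.disjoint_image_inl_image_inr,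
    Set.ncard_image_of_injective _ Sum.inl_injective,
    Set.ncard_image_of_injective _ Sum.inr_injective]

theorem Set.ncard_setOf_unit (p : Prop) [Decidable p] :
    {_u : Unit | p}.ncard = if p then 1 else 0 := by
  split_ifs with hp <;> simp [hp]

theorem Set.ncard_sdiff_pair_add_ite {β : Type*} {I : Set β} {x y : β} [Decidable (x ∈ I ∨ y ∈ I)]
    (hI : I.Finite) (hxy : ¬ (x ∈ I ∧ y ∈ I)) :
    (I \ {x, y}).ncard + (if x ∈ I ∨ y ∈ I then 1 else 0) = I.ncard := by
  by_cases hx : x ∈ I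
  · have hy : y ∉ I := fun hy => hxy ⟨hx, hy⟩
    rw [if_pos (Or.inl hx), ← Set.ncard_sdiff_singleton_add_one hx hI]
    congr 2
    ext c; by_cases hc : c = y <;> simp_all
  · by_cases hy : y ∈ I
    · rw [if_pos (Or.inr hy), ← Set.ncard_sdiff_singleton_add_one hy hI]
      congr 2
      ext c; by_cases hc : c = x <;> simp_all
    · rw [if_neg (by tauto), add_zero]
      congr 1
      ext c; by_cases hc : c = x <;> by_cases hc' : c = y <;> simp_all

open scoped Classical in
theorem Set.ncard_Ioo_sdiff_singleton {α : Type*} [Preorder α] {u b z : α} (huz : u < z)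
    (hI : u ≤ b → (Set.Ioo u b).ncard = 2) :
    (Set.Ioo u b \ {z}).ncard = if u ≤ b then if z < b then 1 else 2 else 0 := by
  split_ifs with hub hzb
  · rw [Set.ncard_sdiff_singleton_of_mem (show z ∈ Set.Ioo u b from ⟨huz, hzb⟩), hI hub]
  · rw [Set.sdiff_singleton_eq_self fun h => hzb h.2, hI hub]
  · have : Set.Ioo u b \ {z} = ∅ :=
      Set.eq_empty_of_forall_notMem fun c hc => hub (hc.1.1.trans hc.1.2).le
    rw [this, Set.ncard_empty]

theorem StrictMono.of_covBy_add_one {α : Type*} [PartialOrder α] [Finite α] {rk : α → ℕ}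
    (h : ∀ a b : α, a ⋖ b → rk b = rk a + 1) : StrictMono rk := by
  classical
  have := Fintype.ofFinite α
  let := Fintype.toLocallyFiniteOrder (α := α)
  exact (strictMono_iff_forall_covBy rk).2 fun a b hab => by rw [h a b hab]; exact Nat.lt_succ_self _

theorem StrictMono.false_of_chain_of_eq_add_two {α : Type*} [Preorder α] {rk : α → ℕ}
    (hrk : StrictMono rk) {a p q b : α} (hb : rk b = rk a + 2) (hap : a < p) (hpq : p < q)
    (hqb : q < b) : False := by
  have := hrk hap; have := hrk hpq; have := hrk hqb
  omega

namespace IsZipper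

variable {α : Type*} [PartialOrder α] {x y z : α}

theorem covBy_left (h : IsZipper x y z) : x ⋖ z := h.2.2.2.1

theorem covBy_right (h : IsZipper x y z) : y ⋖ z := h.2.2.2.2.1

theorem isLUB (h : IsZipper x y z) : IsLUB {x, y} z := h.2.2.2.2.2.2.1

theorem lt_left_iff_lt_right (h : IsZipper x y z) (a : α) : a < x ↔ a < y := h.2.2.2.2.2.2.2 a

theorem not_lt_left_right (h : IsZipper x y z) : ¬ x < y := fun hxy =>
  lt_irrefl x ((h.lt_left_iff_lt_right x).2 hxy)

theorem not_lt_right_left (h : IsZipper x y z) : ¬ y < x := fun hyx =>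
  lt_irrefl y ((h.lt_left_iff_lt_right y).1 hyx)

theorem le_of_left_le_of_right_le (h : IsZipper x y z) {b : α} (hx : x ≤ b) (hy : y ≤ b) :
    z ≤ b :=
  h.isLUB.2 (by rintro w (rfl | rfl) <;> assumption)

theorem lt_left_of_lt_of_ne [Finite α] (h : IsZipper x y z) {a : α} (haz : a < z)
    (hax : a ≠ x) (hay : a ≠ y) : a < x := by
  have : IsStronglyCoatomic α := isStronglyAtomic_dual_iff_is_stronglyCoatomic.1
    (IsStronglyAtomic.of_wellFounded_lt wellFounded_lt)
  obtain ⟨w, haw, hwz⟩ := exists_le_covBy_of_lt haz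
  rcases h.2.2.2.2.2.1 w hwz with rfl | rfl
  · exact haw.lt_of_ne hax
  · exact (h.lt_left_iff_lt_right a).2 (haw.lt_of_ne hay)

end IsZipper

-- So that `simp` and instance search see the sum type, e.g. through `Sum.inl.injEq`.
attribute [reducible] ZipCarrier

open scoped Classical in
theorem ZipCarrier.ncard_eq {α : Type*} {x y z : α} [Finite α] (S : Set (ZipCarrier α x y z)) :
    S.ncard = {c : α | ∃ h : c ≠ x ∧ c ≠ y ∧ c ≠ z, Sum.inl ⟨c, h⟩ ∈ S}.ncard +
      if Sum.inr () ∈ S then 1 else 0 := by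
  have hinr : Sum.inr ⁻¹' S = {_u : Unit | Sum.inr () ∈ S} := by ext ⟨⟩; rfl
  refine (Set.ncard_eq_ncard_preimage_inl_add_ncard_preimage_inr
    (β := {p : α // p ≠ x ∧ p ≠ y ∧ p ≠ z}) (γ := Unit) S).trans ?_
  rw [hinr, Set.ncard_setOf_unit, ← Set.ncard_image_of_injective _ Subtype.val_injective]
  congr 2
  ext c
  simp only [Set.mem_image, Subtype.exists, exists_and_right, exists_eq_right]
  rfl

section ZippedPoset

variable {α : Type*} [PartialOrder α] {x y z : α}

def zipOpenInterval (x y z : α) (A B : ZipCarrier α x y z) : Set (ZipCarrier α x y z) :=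
  {C | zipLE x y z A C ∧ zipLE x y z C B ∧ C ≠ A ∧ C ≠ B}

variable [Finite α] {rk : α → ℕ}

theorem ncard_zipOpenInterval_inl_inl (hzip : IsZipper x y z) (hrk : StrictMono rk)
    (hthin : ∀ a b : α, a ≤ b → rk b = rk a + 2 → (Set.Ioo a b).ncard = 2)
    {a b : {p : α // p ≠ x ∧ p ≠ y ∧ p ≠ z}}
    (hab : a.1 ≤ b.1) (hrkab : rk b.1 = rk a.1 + 2) :
    (zipOpenInterval x y z (Sum.inl a) (Sum.inl b)).ncard = 2 := by
  obtain ⟨a, hax, hay, haz⟩ := a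
  obtain ⟨b, hbx, hby, hbz⟩ := b
  have hzI : z ∉ Set.Ioo a b := fun ⟨haz', hzb⟩ => hrk.false_of_chain_of_eq_add_two hrkab
    (hzip.lt_left_of_lt_of_ne haz' hax hay) hzip.covBy_left.lt hzb
  have hxyI : ¬ (x ∈ Set.Ioo a b ∧ y ∈ Set.Ioo a b) := fun ⟨⟨hax', hxb⟩, _, hyb⟩ =>
    hrk.false_of_chain_of_eq_add_two hrkab hax' hzip.covBy_left.lt
      ((hzip.le_of_left_le_of_right_le hxb.le hyb.le).lt_of_ne (Ne.symm hbz))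
  have hold : {c : α | ∃ h : c ≠ x ∧ c ≠ y ∧ c ≠ z,
      Sum.inl ⟨c, h⟩ ∈ zipOpenInterval x y z (Sum.inl ⟨a, hax, hay, haz⟩)
        (Sum.inl ⟨b, hbx, hby, hbz⟩)} = Set.Ioo a b \ {x, y} := by
    ext c
    simp only [ne_eq, zipOpenInterval, zipLE, Subtype.coe_le_coe, Set.mem_ofPred_eq, Subtype.mk_le_mk,
      Sum.inl.injEq, Subtype.mk.injEq, exists_and_left, exists_prop, Set.mem_sdiff, Set.mem_Ioo,
      Set.mem_insert_iff, Set.mem_singleton_iff, not_or]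
    constructor
    · rintro ⟨hac, hcb, hca, ⟨hcx, hcy, -⟩, hcb'⟩
      exact ⟨⟨hac.lt_of_ne' hca, hcb.lt_of_ne hcb'⟩, hcx, hcy⟩
    · rintro ⟨hc, hcx, hcy⟩
      exact ⟨hc.1.le, hc.2.le, hc.1.ne', ⟨hcx, hcy, fun h => hzI (h ▸ hc)⟩, hc.2.ne⟩
  have hnew : Sum.inr () ∈ zipOpenInterval x y z (Sum.inl ⟨a, hax, hay, haz⟩)
      (Sum.inl ⟨b, hbx, hby, hbz⟩) ↔ x ∈ Set.Ioo a b ∨ y ∈ Set.Ioo a b := by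
    simp only [ne_eq, zipOpenInterval, zipLE, Subtype.coe_le_coe, Set.mem_ofPred_eq, reduceCtorEq,
      not_false_eq_true, and_self, and_true, Set.mem_Ioo]
    rw [hax.le_iff_lt, ← hzip.lt_left_iff_lt_right, ← and_or_left, (Ne.symm hbx).le_iff_lt,
      (Ne.symm hby).le_iff_lt]
  rw [ZipCarrier.ncard_eq, hold]
  classical
  simp only [hnew]
  rw [Set.ncard_sdiff_pair_add_ite (Set.toFinite _) hxyI, hthin a b hab hrkab]

theorem ncard_zipOpenInterval_inl_inr (hzip : IsZipper x y z)
    (hthin : ∀ a b : α, a ≤ b → rk b = rk a + 2 → (Set.Ioo a b).ncard = 2)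
    {a : {p : α // p ≠ x ∧ p ≠ y ∧ p ≠ z}} (hax : a.1 ≤ x) (hrkax : rk x = rk a.1 + 2) :
    (zipOpenInterval x y z (Sum.inl a) (Sum.inr ())).ncard = 2 := by
  obtain ⟨a, hax', hay, haz⟩ := a
  have hold : {c : α | ∃ h : c ≠ x ∧ c ≠ y ∧ c ≠ z,
      Sum.inl ⟨c, h⟩ ∈ zipOpenInterval x y z (Sum.inl ⟨a, hax', hay, haz⟩) (Sum.inr ())} =
      Set.Ioo a x := by
    ext c
    simp only [ne_eq, zipOpenInterval, zipLE, Subtype.coe_le_coe, Set.mem_ofPred_eq, Subtype.mk_le_mk,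
      Sum.inl.injEq, Subtype.mk.injEq, reduceCtorEq, not_false_eq_true, and_true, exists_and_left,
      exists_prop, Set.mem_Ioo]
    constructor
    · rintro ⟨hac, hcx, ⟨hcx', -, -⟩, hca⟩
      exact ⟨hac.lt_of_ne' hca, hcx.lt_of_ne hcx'⟩
    · rintro ⟨hac, hcx⟩
      exact ⟨hac.le, hcx.le, ⟨hcx.ne, fun h => hzip.not_lt_right_left (h ▸ hcx),
        fun h => hzip.covBy_left.lt.asymm (h ▸ hcx)⟩, hac.ne'⟩
  have hnew : Sum.inr () ∉ zipOpenInterval x y z (Sum.inl ⟨a, hax', hay, haz⟩) (Sum.inr ()) := by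
    simp [zipOpenInterval]
  rw [ZipCarrier.ncard_eq, hold, if_neg hnew, add_zero]
  exact hthin a x hax hrkax

theorem ncard_zipOpenInterval_inr_inl (hzip : IsZipper x y z) (hrk : StrictMono rk)
    (hthin : ∀ a b : α, a ≤ b → rk b = rk a + 2 → (Set.Ioo a b).ncard = 2)
    {b : {p : α // p ≠ x ∧ p ≠ y ∧ p ≠ z}} (hb : x ≤ b.1 ∨ y ≤ b.1)
    (hrkxb : rk b.1 = rk x + 2) (hrkyb : rk b.1 = rk y + 2) :
    (zipOpenInterval x y z (Sum.inr ()) (Sum.inl b)).ncard = 2 := by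
  obtain ⟨b, hbx, hby, hbz⟩ := b
  have hold : {c : α | ∃ h : c ≠ x ∧ c ≠ y ∧ c ≠ z,
      Sum.inl ⟨c, h⟩ ∈ zipOpenInterval x y z (Sum.inr ()) (Sum.inl ⟨b, hbx, hby, hbz⟩)} =
      Set.Ioo x b \ {z} ∪ Set.Ioo y b \ {z} := by
    ext c
    simp only [ne_eq, zipOpenInterval, zipLE, Subtype.coe_le_coe, Set.mem_ofPred_eq, Subtype.mk_le_mk,
      reduceCtorEq, not_false_eq_true, Sum.inl.injEq, Subtype.mk.injEq, true_and, exists_and_left,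
      exists_prop, Set.mem_union, Set.mem_sdiff, Set.mem_Ioo, Set.mem_singleton_iff]
    constructor
    · rintro ⟨hc | hc, hcb, ⟨hcx, hcy, hcz⟩, hcb'⟩
      · exact Or.inl ⟨⟨hc.lt_of_ne (Ne.symm hcx), hcb.lt_of_ne hcb'⟩, hcz⟩
      · exact Or.inr ⟨⟨hc.lt_of_ne (Ne.symm hcy), hcb.lt_of_ne hcb'⟩, hcz⟩
    · rintro (⟨⟨hxc, hcb⟩, hcz⟩ | ⟨⟨hyc, hcb⟩, hcz⟩)
      · exact ⟨Or.inl hxc.le, hcb.le, ⟨hxc.ne', fun h => hzip.not_lt_left_right (h ▸ hxc), hcz⟩,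
          hcb.ne⟩
      · exact ⟨Or.inr hyc.le, hcb.le, ⟨fun h => hzip.not_lt_right_left (h ▸ hyc), hyc.ne', hcz⟩,
          hcb.ne⟩
  have hnew : Sum.inr () ∉ zipOpenInterval x y z (Sum.inr ()) (Sum.inl ⟨b, hbx, hby, hbz⟩) := by
    simp [zipOpenInterval]
  have hdisj : Disjoint (Set.Ioo x b \ {z}) (Set.Ioo y b \ {z}) := by
    refine Set.disjoint_left.2 fun c hcx hcy => ?_
    obtain ⟨⟨hxc, hcb⟩, hcz⟩ := hcx
    obtain ⟨⟨hyc, -⟩, -⟩ := hcy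
    exact hrk.false_of_chain_of_eq_add_two hrkxb hzip.covBy_left.lt
      ((hzip.le_of_left_le_of_right_le hxc.le hyc.le).lt_of_ne (Ne.symm hcz)) hcb
  have hzb : z < b ↔ x ≤ b ∧ y ≤ b :=
    ⟨fun h => ⟨(hzip.covBy_left.lt.trans h).le, (hzip.covBy_right.lt.trans h).le⟩,
      fun h => (hzip.le_of_left_le_of_right_le h.1 h.2).lt_of_ne (Ne.symm hbz)⟩
  rw [ZipCarrier.ncard_eq, hold, if_neg hnew, add_zero, Set.ncard_union_eq hdisj,
    Set.ncard_Ioo_sdiff_singleton hzip.covBy_left.lt (hthin x b · hrkxb),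
    Set.ncard_Ioo_sdiff_singleton hzip.covBy_right.lt (hthin y b · hrkyb), hzb]
  split_ifs <;> tauto

end ZippedPoset

theorem zipped_thin_general {α : Type*} [PartialOrder α] [Finite α]
    (rk : α → ℕ)
    (hrkcov : ∀ a b : α, a ⋖ b → rk b = rk a + 1)
    (hthin : ∀ a b : α, a ≤ b → rk b = rk a + 2 → {c : α | a < c ∧ c < b}.ncard = 2)
    (x y z : α) (hzip : IsZipper x y z) :
    ∀ A B : ZipCarrier α x y z, zipLE x y z A B →
      zipRank x y z rk B = zipRank x y z rk A + 2 →
      {C : ZipCarrier α x y z |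
        zipLE x y z A C ∧ zipLE x y z C B ∧ C ≠ A ∧ C ≠ B}.ncard = 2 := by
  intro A B hAB hrkAB
  have hrk : StrictMono rk := .of_covBy_add_one hrkcov
  have hrkxy : rk x = rk y := by
    have := hrkcov x z hzip.covBy_left
    have := hrkcov y z hzip.covBy_right
    omega
  rcases A with a | ⟨⟩ <;> rcases B with b | ⟨⟩
  · exact ncard_zipOpenInterval_inl_inl hzip hrk hthin hAB hrkAB
  · exact ncard_zipOpenInterval_inl_inr hzip hthin hAB hrkAB
  · exact ncard_zipOpenInterval_inr_inl hzip hrk hthin hAB hrkAB (hrkxy ▸ hrkAB)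
  · simp [zipRank] at hrkAB

/-- zipping a proper zipper in a finite thin graded poset yields a thin
poset: every rank-2 interval of `P'` has exactly two elements of intermediate rank. -/
theorem zipped_thin {α : Type*} [PartialOrder α] [BoundedOrder α] [Finite α]
    (rk : α → ℕ) (hrk0 : rk (⊥ : α) = 0)
    (hrkcov : ∀ a b : α, a ⋖ b → rk b = rk a + 1)
    (hthin : ∀ a b : α, a ≤ b → rk b = rk a + 2 → {c : α | a < c ∧ c < b}.ncard = 2)
    (x y z : α) (hzip : IsZipper x y z) (hproper : z ≠ ⊤) :
    ∀ A B : ZipCarrier α x y z, zipLE x y z A B →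
      zipRank x y z rk B = zipRank x y z rk A + 2 →
      {C : ZipCarrier α x y z |
        zipLE x y z A C ∧ zipLE x y z C B ∧ C ≠ A ∧ C ≠ B}.ncard = 2 :=
  zipped_thin_general rk hrkcov hthin x y z hzip
end

section
/- Let (W,S) be a Coxeter system with Bruhat order, s ∈ S, u ≤ w with u < us, w < ws, and us ≰ w. Then the Bruhat interval [u,ws] is order-isomorphic to the product poset [u,w] × [1,s], where [1,s] is a two-element chain. -/
/-- Bruhat order on a Coxeter group, defined via the subword property:
`u ≤ v` iff some reduced word for `v` contains a reduced word for `u` as a subword. -/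
def bruhatLE {B W : Type*} [Group W] {M : CoxeterMatrix B}
    (cs : CoxeterSystem M W) (u v : W) : Prop :=
  ∃ lv lu : List B, cs.IsReduced lv ∧ cs.wordProd lv = v ∧
    cs.IsReduced lu ∧ cs.wordProd lu = u ∧ lu.Sublist lv

/-- Strict Bruhat order. -/
def bruhatLT {B W : Type*} [Group W] {M : CoxeterMatrix B}
    (cs : CoxeterSystem M W) (u v : W) : Prop :=
  bruhatLE cs u v ∧ u ≠ v


/-!
Since `us ≰ w`, every `v ∈ [u, w]` satisfies `v < vs`: otherwise the lifting property would give
`us ≤ v ≤ w`. The lifting property also shows that each `x ∈ [u, ws]` lies in `[u, w]` when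
`x < xs` and is of the form `vs` with `v ∈ [u, w]` otherwise, and for `x < xs`, `y < ys` one has
`x ≤ ys ↔ x ≤ y ↔ xs ≤ ys`, which identifies the order on `[u, ws]` with the product order.

The Bruhat order is defined through subwords of *some* reduced word, while transitivity and the
lifting property need subwords of *every* reduced word. Both follow from the description of the
order by chains `x < xt` with `t` a reflection, which rests on the strong exchange property. That
property is proved with the action of `W` on `W × ZMod 2` in which `w` shifts the second coordinate
of `(t, e)` by the parity of the number of occurrences of `t` in the right inversion sequence of a
word for `w`; in particular this parity does not depend on the word.
-/

open List

theorem List.sublist_append_singleton_iff {α : Type*} {τ ω : List α} {b : α} :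
    τ <+ ω ++ [b] ↔ τ <+ ω ∨ ∃ τ₀, τ = τ₀ ++ [b] ∧ τ₀ <+ ω := by
  constructor
  · intro h
    obtain ⟨τ₀, τ₁, rfl, h₀, h₁⟩ := sublist_append_iff.mp h
    rcases sublist_singleton.mp h₁ with rfl | rfl
    · exact Or.inl (by simpa using h₀)
    · exact Or.inr ⟨τ₀, rfl, h₀⟩
  · rintro (h | ⟨τ₀, rfl, h⟩)
    · exact h.trans (sublist_append_left ω [b])
    · exact h.append (Sublist.refl [b])

namespace CoxeterSystem

variable {B W : Type*} [Group W] {M : CoxeterMatrix B} (cs : CoxeterSystem M W)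

local prefix:100 "π" => cs.wordProd
local prefix:100 "ℓ" => cs.length
local prefix:100 "σ" => cs.simple

theorem rightInvSeq_eq_map_leftInvSeq (ω : List B) :
    cs.rightInvSeq ω = (cs.leftInvSeq ω).map (fun x => (π ω)⁻¹ * x * π ω) := by
  induction ω with
  | nil => rfl
  | cons i ω ih =>
    simp only [rightInvSeq, leftInvSeq, map_cons, ih, map_map, wordProd_cons, mul_inv_rev,
      inv_simple, cons.injEq]
    constructor
    · simp [mul_assoc]
    · refine map_congr_left fun x _ => ?_
      simp [mul_assoc]

theorem prod_map_alternatingWord {G : Type*} [Monoid G] (f : B → G) (i i' : B) (k : ℕ) :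
    ((alternatingWord i i' (2 * k)).map f).prod = (f i * f i') ^ k := by
  induction k with
  | zero => simp [alternatingWord]
  | succ k ih =>
    rw [show 2 * (k + 1) = 2 * k + 1 + 1 by ring, alternatingWord_succ', alternatingWord_succ',
      if_neg (by simp [parity_simps]), if_pos (by simp [parity_simps]), map_cons, map_cons,
      prod_cons, prod_cons, ih, pow_succ', mul_assoc]

theorem wordProd_alternatingWord_two_mul (i i' : B) :
    π (alternatingWord i i' (2 * M i i')) = 1 :=
  (prod_map_alternatingWord cs.simple i i' _).trans (cs.simple_mul_simple_pow i i')

-- The inversion sequence of the relation word lists each reflection of the dihedral subgroup twice.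
theorem count_rightInvSeq_alternatingWord_even [DecidableEq W] (i i' : B) (t : W) :
    Even ((cs.rightInvSeq (alternatingWord i i' (2 * M i i'))).count t) := by
  set m := M i i'
  have hlis : cs.leftInvSeq (alternatingWord i i' (2 * m)) =
      (range (2 * m)).map fun k => π (alternatingWord i' i (2 * k + 1)) := by
    refine ext_getElem (by simp) fun k hk _ => ?_
    rw [getElem_map, getElem_range]
    exact cs.getElem_leftInvSeq_alternatingWord i i' m k (by simpa using hk)
  have hperiodic : ∀ k, π (alternatingWord i' i (2 * (m + k) + 1)) =
      π (alternatingWord i' i (2 * k + 1)) := by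
    intro k
    have h : ∀ n, (2 * n + 1) / 2 = n := by omega
    simp only [prod_alternatingWord_eq_mul_pow, Nat.not_even_bit1, if_false, h, pow_add, m,
      simple_mul_simple_pow', one_mul]
  rw [rightInvSeq_eq_map_leftInvSeq, wordProd_alternatingWord_two_mul, hlis, two_mul, range_add,
    map_append, map_map]
  simp only [inv_one, one_mul, mul_one, map_id', count_append, Function.comp_def, hperiodic]
  exact ⟨_, rfl⟩

section ParityRepresentation

variable [DecidableEq W]

def parityPerm (i : B) : Equiv.Perm (W × ZMod 2) :=
  Function.Involutive.toPerm (fun x => (σ i * x.1 * σ i, x.2 + if x.1 = σ i then 1 else 0)) <| by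
    rintro ⟨t, e⟩
    have hfix : σ i * t * σ i = σ i ↔ t = σ i := by
      constructor
      · intro h
        simpa [mul_assoc] using congrArg (fun y => σ i * y * σ i) h
      · rintro rfl
        simp
    ext
    · simp [mul_assoc]
    · by_cases ht : t = σ i
      · simp [ht, add_assoc, show (1 : ZMod 2) + 1 = 0 from rfl]
      · simp [ht, hfix]

theorem parityPerm_apply (i : B) (t : W) (e : ZMod 2) :
    cs.parityPerm i (t, e) = (σ i * t * σ i, e + if t = σ i then 1 else 0) :=
  rfl

theorem prod_map_parityPerm_apply (ω : List B) (t : W) (e : ZMod 2) :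
    (ω.map cs.parityPerm).prod (t, e) =
      (π ω * t * (π ω)⁻¹, e + ((cs.rightInvSeq ω).count t : ZMod 2)) := by
  induction ω generalizing e with
  | nil => simp
  | cons i ω ih =>
    have hconj : π ω * t * (π ω)⁻¹ = σ i ↔ (π ω)⁻¹ * σ i * π ω = t := by
      constructor <;> intro h <;> rw [← h] <;> group
    rw [map_cons, prod_cons, Equiv.Perm.mul_apply, ih]
    simp only [parityPerm_apply, rightInvSeq, count_cons, beq_iff_eq,
      hconj, wordProd_cons, mul_inv_rev, inv_simple, Prod.mk.injEq]
    constructor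
    · group
    · push_cast
      ring

theorem isLiftable_parityPerm : M.IsLiftable cs.parityPerm := by
  intro i i'
  rw [← prod_map_alternatingWord]
  ext ⟨t, e⟩ : 1
  obtain ⟨c, hc⟩ := cs.count_rightInvSeq_alternatingWord_even i i' t
  rw [prod_map_parityPerm_apply, hc, wordProd_alternatingWord_two_mul]
  simp [← two_mul, show (2 : ZMod 2) = 0 from rfl]

noncomputable def parityRep : W →* Equiv.Perm (W × ZMod 2) :=
  cs.lift ⟨cs.parityPerm, cs.isLiftable_parityPerm⟩

theorem parityRep_wordProd_apply (ω : List B) (t : W) (e : ZMod 2) :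
    cs.parityRep (π ω) (t, e) =
      (π ω * t * (π ω)⁻¹, e + ((cs.rightInvSeq ω).count t : ZMod 2)) := by
  rw [← prod_map_parityPerm_apply, wordProd, map_list_prod, map_map]
  congr 3
  exact funext (cs.lift_apply_simple cs.isLiftable_parityPerm)

theorem parityRep_apply (w t : W) (e : ZMod 2) :
    cs.parityRep w (t, e) = (w * t * w⁻¹, e + (cs.parityRep w (t, 0)).2) := by
  obtain ⟨ω, rfl⟩ := cs.wordProd_surjective w
  simp [parityRep_wordProd_apply]

theorem parityRep_apply_self {t : W} (ht : cs.IsReflection t) :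
    cs.parityRep t (t, 0) = (t, 1) := by
  obtain ⟨v, i, rfl⟩ := ht
  set a := (cs.parityRep v⁻¹ (v * σ i * v⁻¹, 0)).2
  set b := (cs.parityRep v (σ i, 0)).2
  have hinv : cs.parityRep v⁻¹ (v * σ i * v⁻¹, 0) = (σ i, a) := by
    rw [parityRep_apply, zero_add, Prod.mk.injEq]
    exact ⟨by group, rfl⟩
  have hsimple : cs.parityRep (σ i) (σ i, a) = (σ i, a + 1) := by
    simpa [mul_assoc] using cs.parityRep_wordProd_apply [i] (σ i) a
  have hcancel : a + b = 0 := by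
    have h : cs.parityRep v (cs.parityRep v⁻¹ (v * σ i * v⁻¹, 0)) = (v * σ i * v⁻¹, 0) := by
      rw [← Equiv.Perm.mul_apply, ← map_mul, mul_inv_cancel, map_one, Equiv.Perm.one_apply]
    rw [hinv, parityRep_apply] at h
    exact congrArg Prod.snd h
  calc cs.parityRep (v * σ i * v⁻¹) (v * σ i * v⁻¹, 0)
      = cs.parityRep v (cs.parityRep (σ i) (cs.parityRep v⁻¹ (v * σ i * v⁻¹, 0))) := by
        simp only [map_mul, Equiv.Perm.mul_apply]
    _ = (v * σ i * v⁻¹, 1) := by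
        rw [hinv, hsimple, parityRep_apply, add_right_comm, hcancel, zero_add]

end ParityRepresentation

theorem mem_rightInvSeq_of_isRightInversion {ω : List B} {t : W}
    (ht : cs.IsRightInversion (π ω) t) : t ∈ cs.rightInvSeq ω := by
  classical
  by_contra hmem
  obtain ⟨ω', hω', hπ'⟩ := cs.exists_isReduced (π ω * t)
  have hodd : ((cs.rightInvSeq ω').count t : ZMod 2) = 1 := by
    calc ((cs.rightInvSeq ω').count t : ZMod 2)
        = (cs.parityRep (π ω') (t, 0)).2 := by simp [parityRep_wordProd_apply]
      _ = (cs.parityRep (π ω) (cs.parityRep t (t, 0))).2 := by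
        rw [← hπ', map_mul, Equiv.Perm.mul_apply]
      _ = 1 := by
        simp [parityRep_apply_self cs ht.1, parityRep_wordProd_apply, count_eq_zero.mpr hmem]
  have hmem' : t ∈ cs.rightInvSeq ω' := by
    rw [← count_pos_iff, Nat.pos_iff_ne_zero]
    intro h
    simp [h] at hodd
  have hinv := cs.isRightInversion_of_mem_rightInvSeq hω' hmem'
  rw [← hπ'] at hinv
  exact ht.1.isRightInversion_mul_left_iff.mp hinv ht

theorem exists_eraseIdx_of_isRightInversion {ω : List B} {t : W}
    (ht : cs.IsRightInversion (π ω) t) : ∃ j < ω.length, π ω * t = π (ω.eraseIdx j) := by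
  obtain ⟨j, hj, rfl⟩ := mem_iff_getElem.mp (cs.mem_rightInvSeq_of_isRightInversion ht)
  exact ⟨j, by simpa using hj, by rw [← getD_eq_getElem _ 1 hj, wordProd_mul_getD_rightInvSeq]⟩

theorem IsReduced.append_singleton {ω : List B} (hω : cs.IsReduced ω) {i : B}
    (hi : ¬cs.IsRightDescent (π ω) i) : cs.IsReduced (ω ++ [i]) := by
  rw [IsReduced, wordProd_append, wordProd_singleton, cs.not_isRightDescent_iff.mp hi,
    length_append, length_singleton, hω]

theorem IsReduced.of_append_singleton {ω : List B} {i : B} (hω : cs.IsReduced (ω ++ [i])) :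
    cs.IsReduced ω ∧ ¬cs.IsRightDescent (π ω) i := by
  have hpre : cs.IsReduced ω := by simpa using hω.take ω.length
  refine ⟨hpre, fun hi => ?_⟩
  have hlen := hω.eq
  rw [wordProd_append, wordProd_singleton, length_append, length_singleton, ← hpre.eq] at hlen
  unfold IsRightDescent at hi
  omega

theorem exists_reduced_sublist (ω : List B) :
    ∃ ω', ω' <+ ω ∧ cs.IsReduced ω' ∧ π ω' = π ω := by
  induction ω using List.reverseRecOn with
  | nil => exact ⟨[], Sublist.slnil, by simp [IsReduced], rfl⟩
  | append_singleton ω i ih =>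
    obtain ⟨ρ, hsub, hρ, hπ⟩ := ih
    by_cases hi : cs.IsRightDescent (π ρ) i
    · obtain ⟨j, hj, heq⟩ := cs.exists_eraseIdx_of_isRightInversion
        ((cs.isRightInversion_simple_iff_isRightDescent _ i).mpr hi)
      refine ⟨ρ.eraseIdx j, ((eraseIdx_sublist ρ j).trans hsub).trans (sublist_append_left _ _),
        ?_, by rw [← heq, hπ, wordProd_append, wordProd_singleton]⟩
      have hlen := length_eraseIdx_add_one hj
      have hρlen := hρ.eq
      rw [isRightDescent_iff] at hi
      rw [IsReduced, ← heq]
      omega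
    · exact ⟨ρ ++ [i], hsub.append (Sublist.refl _), hρ.append_singleton cs hi,
        by rw [wordProd_append, wordProd_append, hπ]⟩

def BruhatStep (x y : W) : Prop := ∃ t, cs.IsReflection t ∧ x * t = y ∧ ℓ x < ℓ y

theorem bruhatStep_mul_simple {x : W} {i : B} (h : ¬cs.IsRightDescent x i) :
    cs.BruhatStep x (x * σ i) :=
  ⟨σ i, cs.isReflection_simple i, rfl, by rw [not_isRightDescent_iff] at h; omega⟩

theorem BruhatStep.exists_sublist {x y : W} (h : cs.BruhatStep x y) {ω : List B} (hω : π ω = y) :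
    ∃ τ, τ <+ ω ∧ cs.IsReduced τ ∧ π τ = x := by
  obtain ⟨t, ht, rfl, hlt⟩ := h
  have hxtt : x * t * t = x := by rw [mul_assoc, ht.mul_self, mul_one]
  obtain ⟨j, -, heq⟩ := cs.exists_eraseIdx_of_isRightInversion (ω := ω) (t := t)
    ⟨ht, by rwa [hω, hxtt]⟩
  obtain ⟨τ, hsub, hτ, hτπ⟩ := cs.exists_reduced_sublist (ω.eraseIdx j)
  exact ⟨τ, hsub.trans (eraseIdx_sublist ω j), hτ, by rw [hτπ, ← heq, hω, hxtt]⟩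

theorem BruhatStep.mul_simple_or {x y : W} (h : cs.BruhatStep x y) (i : B) :
    Relation.ReflTransGen cs.BruhatStep (x * σ i) y ∨
      Relation.ReflTransGen cs.BruhatStep (x * σ i) (y * σ i) := by
  obtain ⟨t, ht, rfl, hlt⟩ := h
  have hconj : cs.IsReflection (σ i * t * σ i) := by simpa using ht.conj (σ i)
  have hxt : x * σ i * (σ i * t * σ i) = x * t * σ i := by simp [mul_assoc]
  have hne := hconj.length_mul_left_ne (x * σ i)
  rw [hxt] at hne
  rcases hne.lt_or_gt with hdown | hup
  · -- `ρ ++ [i]` is a word for `x t` with `ρ` reduced; exchanging `t` must delete the last letter.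
    left
    obtain ⟨ρ, hρ, hρπ⟩ := cs.exists_isReduced (x * t * σ i)
    have hρi : π (ρ ++ [i]) = x * t := by simp [wordProd_append, ← hρπ, mul_assoc]
    have hxtt : x * t * t = x := by rw [mul_assoc, ht.mul_self, mul_one]
    obtain ⟨j, hj, heq⟩ := cs.exists_eraseIdx_of_isRightInversion (ω := ρ ++ [i]) (t := t)
      ⟨ht, by rwa [hρi, hxtt]⟩
    rw [hρi, hxtt] at heq
    rw [length_append, length_singleton] at hj
    rcases Nat.lt_succ_iff_lt_or_eq.mp hj with hj | rfl
    · rw [eraseIdx_append_of_lt_length hj, wordProd_append, wordProd_singleton] at heq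
      have hle : ℓ (x * σ i) ≤ (ρ.eraseIdx j).length := by
        rw [heq, simple_mul_simple_cancel_right]
        exact cs.length_wordProd_le _
      have hlen := length_eraseIdx_add_one hj
      have hρlen := hρ.eq
      rw [← hρπ] at hρlen
      omega
    · rw [eraseIdx_append_of_length_le le_rfl, Nat.sub_self, eraseIdx_cons_zero, append_nil] at heq
      have hxs : x * σ i = x * t := by
        nth_rw 1 [heq]
        rw [← hρπ, simple_mul_simple_cancel_right]
      rw [hxs]
  · exact Or.inr (.single ⟨_, hconj, hxt, hup⟩)

theorem reflTransGen_mul_simple_or {x y : W} (h : Relation.ReflTransGen cs.BruhatStep x y) (i : B) :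
    Relation.ReflTransGen cs.BruhatStep (x * σ i) y ∨
      Relation.ReflTransGen cs.BruhatStep (x * σ i) (y * σ i) := by
  induction h with
  | refl => exact Or.inr .refl
  | tail _ hstep ih =>
    rcases ih with ih | ih
    · exact Or.inl (ih.tail hstep)
    · exact (hstep.mul_simple_or cs i).imp ih.trans ih.trans

theorem reflTransGen_of_sublist {ω τ : List B} (hω : cs.IsReduced ω) (hτ : τ <+ ω) :
    Relation.ReflTransGen cs.BruhatStep (π τ) (π ω) := by
  induction ω using List.reverseRecOn generalizing τ with
  | nil => rw [sublist_nil.mp hτ]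
  | append_singleton ω i ih =>
    obtain ⟨hω₀, hi⟩ := hω.of_append_singleton
    have hstep := cs.bruhatStep_mul_simple hi
    rw [wordProd_append, wordProd_singleton]
    rcases sublist_append_singleton_iff.mp hτ with hτ | ⟨τ₀, rfl, hτ₀⟩
    · exact (ih hω₀ hτ).tail hstep
    · rw [wordProd_append, wordProd_singleton]
      exact (cs.reflTransGen_mul_simple_or (ih hω₀ hτ₀) i).elim (·.tail hstep) id

theorem exists_sublist_of_reflTransGen {x y : W} (h : Relation.ReflTransGen cs.BruhatStep x y)
    {ω : List B} (hω : π ω = y) : ∃ τ, τ <+ ω ∧ cs.IsReduced τ ∧ π τ = x := by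
  induction h using Relation.ReflTransGen.head_induction_on with
  | refl =>
    obtain ⟨τ, hτ, hτred, hτπ⟩ := cs.exists_reduced_sublist ω
    exact ⟨τ, hτ, hτred, hτπ.trans hω⟩
  | head hstep _ ih =>
    obtain ⟨τ', hτ', -, hτ'π⟩ := ih
    obtain ⟨τ, hτ, hτred, hτπ⟩ := hstep.exists_sublist cs hτ'π
    exact ⟨τ, hτ.trans hτ', hτred, hτπ⟩

theorem bruhatLE_iff_reflTransGen {u w : W} :
    bruhatLE cs u w ↔ Relation.ReflTransGen cs.BruhatStep u w := by
  constructor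
  · rintro ⟨ω, τ, hω, rfl, -, rfl, hτ⟩
    exact cs.reflTransGen_of_sublist hω hτ
  · intro h
    obtain ⟨ω, hω, rfl⟩ := cs.exists_isReduced w
    obtain ⟨τ, hτ, hτred, rfl⟩ := cs.exists_sublist_of_reflTransGen h rfl
    exact ⟨ω, τ, hω, rfl, hτred, rfl, hτ⟩

theorem bruhatLE_refl (u : W) : bruhatLE cs u u :=
  (cs.bruhatLE_iff_reflTransGen).mpr .refl

theorem bruhatLE_trans {u v w : W} (huv : bruhatLE cs u v) (hvw : bruhatLE cs v w) :
    bruhatLE cs u w := by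
  rw [bruhatLE_iff_reflTransGen] at *
  exact huv.trans hvw

theorem exists_sublist_of_bruhatLE {u w : W} (h : bruhatLE cs u w) {ω : List B} (hω : π ω = w) :
    ∃ τ, τ <+ ω ∧ cs.IsReduced τ ∧ π τ = u :=
  cs.exists_sublist_of_reflTransGen ((cs.bruhatLE_iff_reflTransGen).mp h) hω

theorem length_le_of_bruhatLE {u w : W} (h : bruhatLE cs u w) : ℓ u ≤ ℓ w := by
  obtain ⟨ω, τ, hω, rfl, hτ, rfl, hsub⟩ := h
  rw [hω.eq, hτ.eq]
  exact hsub.length_le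

theorem eq_of_bruhatLE_of_length_le {u w : W} (h : bruhatLE cs u w) (hl : ℓ w ≤ ℓ u) : u = w := by
  obtain ⟨ω, τ, hω, rfl, hτ, rfl, hsub⟩ := h
  rw [hω.eq, hτ.eq] at hl
  rw [hsub.eq_of_length_le hl]

theorem bruhatLE_antisymm {u w : W} (huw : bruhatLE cs u w) (hwu : bruhatLE cs w u) : u = w :=
  cs.eq_of_bruhatLE_of_length_le huw (cs.length_le_of_bruhatLE hwu)

theorem length_lt_of_bruhatLT {u w : W} (h : bruhatLT cs u w) : ℓ u < ℓ w :=
  (cs.length_le_of_bruhatLE h.1).lt_of_not_ge fun hl => h.2 (cs.eq_of_bruhatLE_of_length_le h.1 hl)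

theorem bruhatLE_mul_simple {x : W} {i : B} (h : ¬cs.IsRightDescent x i) :
    bruhatLE cs x (x * σ i) :=
  (cs.bruhatLE_iff_reflTransGen).mpr (.single (cs.bruhatStep_mul_simple h))

theorem mul_simple_bruhatLE {x : W} {i : B} (h : cs.IsRightDescent x i) :
    bruhatLE cs (x * σ i) x := by
  simpa using cs.bruhatLE_mul_simple (cs.isRightDescent_iff_not_isRightDescent_mul.mp h)

theorem mul_simple_bruhatLE_or {u w : W} (h : bruhatLE cs u w) (i : B) :
    bruhatLE cs (u * σ i) w ∨ bruhatLE cs (u * σ i) (w * σ i) := by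
  simpa only [bruhatLE_iff_reflTransGen] using
    cs.reflTransGen_mul_simple_or ((cs.bruhatLE_iff_reflTransGen).mp h) i

theorem mul_simple_bruhatLE_mul_simple {u w : W} {i : B} (hw : ¬cs.IsRightDescent w i)
    (h : bruhatLE cs u w) : bruhatLE cs (u * σ i) (w * σ i) :=
  (cs.mul_simple_bruhatLE_or h i).elim (cs.bruhatLE_trans · (cs.bruhatLE_mul_simple hw)) id

theorem mul_simple_bruhatLE_of_isRightDescent {u w : W} {i : B} (hw : cs.IsRightDescent w i)
    (h : bruhatLE cs u w) : bruhatLE cs (u * σ i) w :=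
  (cs.mul_simple_bruhatLE_or h i).elim id (cs.bruhatLE_trans · (cs.mul_simple_bruhatLE hw))

theorem bruhatLE_or_of_bruhatLE_mul_simple {x w : W} {i : B} (h : bruhatLE cs x (w * σ i)) :
    bruhatLE cs x w ∨ (bruhatLE cs (x * σ i) w ∧ cs.IsRightDescent x i) := by
  obtain ⟨ω, hω, rfl⟩ := cs.exists_isReduced w
  obtain ⟨τ, hτ, hτred, rfl⟩ := cs.exists_sublist_of_bruhatLE h (ω := ω ++ [i])
    (by rw [wordProd_append, wordProd_singleton])
  rcases sublist_append_singleton_iff.mp hτ with hτ | ⟨τ₀, rfl, hτ₀⟩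
  · exact Or.inl ⟨ω, τ, hω, rfl, hτred, rfl, hτ⟩
  · obtain ⟨hτ₀red, hτ₀i⟩ := hτred.of_append_singleton
    rw [wordProd_append, wordProd_singleton, simple_mul_simple_cancel_right,
      isRightDescent_iff_not_isRightDescent_mul, simple_mul_simple_cancel_right]
    exact Or.inr ⟨⟨ω, τ₀, hω, rfl, hτ₀red, rfl, hτ₀⟩, hτ₀i⟩

theorem bruhatLE_of_bruhatLE_mul_simple {x w : W} {i : B} (hx : ¬cs.IsRightDescent x i)
    (h : bruhatLE cs x (w * σ i)) : bruhatLE cs x w :=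
  (cs.bruhatLE_or_of_bruhatLE_mul_simple h).elim id fun h' => absurd h'.2 hx

theorem mul_simple_bruhatLE_of_bruhatLE_mul_simple {x w : W} {i : B} (hx : cs.IsRightDescent x i)
    (h : bruhatLE cs x (w * σ i)) : bruhatLE cs (x * σ i) w :=
  (cs.bruhatLE_or_of_bruhatLE_mul_simple h).elim (cs.bruhatLE_trans (cs.mul_simple_bruhatLE hx))
    And.left

theorem bruhatLE_mul_simple_iff {x y : W} {i : B} (hx : ¬cs.IsRightDescent x i)
    (hy : ¬cs.IsRightDescent y i) : bruhatLE cs x (y * σ i) ↔ bruhatLE cs x y :=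
  ⟨cs.bruhatLE_of_bruhatLE_mul_simple hx, (cs.bruhatLE_trans · (cs.bruhatLE_mul_simple hy))⟩

theorem mul_simple_bruhatLE_mul_simple_iff {x y : W} {i : B} (hx : ¬cs.IsRightDescent x i)
    (hy : ¬cs.IsRightDescent y i) : bruhatLE cs (x * σ i) (y * σ i) ↔ bruhatLE cs x y :=
  ⟨fun h => cs.bruhatLE_of_bruhatLE_mul_simple hx (cs.bruhatLE_trans (cs.bruhatLE_mul_simple hx) h),
    cs.mul_simple_bruhatLE_mul_simple hy⟩

theorem bruhatLE_ite_mul_simple_iff {v v' : W} {i : B} (hv : ¬cs.IsRightDescent v i)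
    (hv' : ¬cs.IsRightDescent v' i) (hvv' : ¬bruhatLE cs (v * σ i) v') (b b' : Bool) :
    (bruhatLE cs v v' ∧ b ≤ b') ↔
      bruhatLE cs (if b then v * σ i else v) (if b' then v' * σ i else v') := by
  cases b <;> cases b'
  · simp
  · simpa using (cs.bruhatLE_mul_simple_iff hv hv').symm
  · exact iff_of_false (fun h => absurd h.2 (by decide)) hvv'
  · simpa using (cs.mul_simple_bruhatLE_mul_simple_iff hv hv').symm

theorem ite_mul_simple_mem_interval {u v w : W} {i : B} (hv : ¬cs.IsRightDescent v i)
    (hw : ¬cs.IsRightDescent w i) (huv : bruhatLE cs u v) (hvw : bruhatLE cs v w) (b : Bool) :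
    bruhatLE cs u (if b then v * σ i else v) ∧
      bruhatLE cs (if b then v * σ i else v) (w * σ i) := by
  cases b
  · exact ⟨huv, cs.bruhatLE_trans hvw (cs.bruhatLE_mul_simple hw)⟩
  · exact ⟨cs.bruhatLE_trans huv (cs.bruhatLE_mul_simple hv),
      cs.mul_simple_bruhatLE_mul_simple hw hvw⟩

theorem exists_ite_mul_simple_eq_of_mem_interval {u w x : W} {i : B} (hu : ¬cs.IsRightDescent u i)
    (hux : bruhatLE cs u x) (hxw : bruhatLE cs x (w * σ i)) :
    ∃ (v : W) (b : Bool), bruhatLE cs u v ∧ bruhatLE cs v w ∧ (if b then v * σ i else v) = x := by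
  by_cases hx : cs.IsRightDescent x i
  · refine ⟨x * σ i, true, ?_, cs.mul_simple_bruhatLE_of_bruhatLE_mul_simple hx hxw,
      cs.simple_mul_simple_cancel_right i⟩
    exact cs.bruhatLE_of_bruhatLE_mul_simple hu (by rwa [simple_mul_simple_cancel_right])
  · exact ⟨x, false, hux, cs.bruhatLE_of_bruhatLE_mul_simple hx hxw, rfl⟩

end CoxeterSystem

theorem bruhat_interval_iso_product_general {B W : Type*} [Group W] {M : CoxeterMatrix B}
    (cs : CoxeterSystem M W) (u w : W) (s : B)
    (hu : bruhatLT cs u (u * cs.simple s))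
    (hw : bruhatLT cs w (w * cs.simple s))
    (hus : ¬ bruhatLE cs (u * cs.simple s) w) :
    ∃ f : {v : W // bruhatLE cs u v ∧ bruhatLE cs v w} × Bool ≃
          {v : W // bruhatLE cs u v ∧ bruhatLE cs v (w * cs.simple s)},
      (∀ p, (f p).val = if p.2 then p.1.val * cs.simple s else p.1.val) ∧
      (∀ p q, (bruhatLE cs p.1.val q.1.val ∧ p.2 ≤ q.2) ↔
        bruhatLE cs (f p).val (f q).val) := by
  have hu' : ¬cs.IsRightDescent u s := (cs.length_lt_of_bruhatLT hu).asymm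
  have hw' : ¬cs.IsRightDescent w s := (cs.length_lt_of_bruhatLT hw).asymm
  have hasc (v : {v : W // bruhatLE cs u v ∧ bruhatLE cs v w}) : ¬cs.IsRightDescent v.1 s :=
    fun hv => hus (cs.bruhatLE_trans (cs.mul_simple_bruhatLE_of_isRightDescent hv v.2.1) v.2.2)
  let f (p : {v : W // bruhatLE cs u v ∧ bruhatLE cs v w} × Bool) :
      {v : W // bruhatLE cs u v ∧ bruhatLE cs v (w * cs.simple s)} :=
    ⟨_, cs.ite_mul_simple_mem_interval (hasc p.1) hw' p.1.2.1 p.1.2.2 p.2⟩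
  have hf (p q) : (bruhatLE cs p.1.val q.1.val ∧ p.2 ≤ q.2) ↔ bruhatLE cs (f p).val (f q).val :=
    cs.bruhatLE_ite_mul_simple_iff (hasc p.1) (hasc q.1) (fun h => hus (cs.bruhatLE_trans
      (cs.bruhatLE_trans (cs.mul_simple_bruhatLE_mul_simple (hasc p.1) p.1.2.1) h) q.1.2.2)) p.2 q.2
  have hinj : Function.Injective f := fun p q hpq => by
    obtain ⟨hle, hb⟩ := (hf p q).mpr (hpq ▸ cs.bruhatLE_refl _)
    obtain ⟨hge, hb'⟩ := (hf q p).mpr (hpq ▸ cs.bruhatLE_refl _)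
    exact Prod.ext (Subtype.ext (cs.bruhatLE_antisymm hle hge)) (le_antisymm hb hb')
  have hsurj : Function.Surjective f := by
    rintro ⟨x, hux, hxw⟩
    obtain ⟨v, b, huv, hvw, rfl⟩ := cs.exists_ite_mul_simple_eq_of_mem_interval hu' hux hxw
    exact ⟨(⟨v, huv, hvw⟩, b), rfl⟩
  exact ⟨Equiv.ofBijective f ⟨hinj, hsurj⟩, fun _ => rfl, hf⟩

/-- if `u < us`, `w < ws`, `u ≤ w` and `us ≰ w`, then the Bruhat interval
`[u,ws]` is order-isomorphic to the product of `[u,w]` with the two-element chain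
`[1,s]` (encoded as `Bool` with `false < true`), via `(v,1) ↦ v`, `(v,s) ↦ vs`. -/
theorem bruhat_interval_iso_product {B W : Type*} [Group W] {M : CoxeterMatrix B}
    (cs : CoxeterSystem M W) (u w : W) (s : B)
    (huw : bruhatLE cs u w)
    (hu : bruhatLT cs u (u * cs.simple s))
    (hw : bruhatLT cs w (w * cs.simple s))
    (hus : ¬ bruhatLE cs (u * cs.simple s) w) :
    ∃ f : {v : W // bruhatLE cs u v ∧ bruhatLE cs v w} × Bool ≃
          {v : W // bruhatLE cs u v ∧ bruhatLE cs v (w * cs.simple s)},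
      (∀ p, (f p).val = if p.2 then p.1.val * cs.simple s else p.1.val) ∧
      (∀ p q, (bruhatLE cs p.1.val q.1.val ∧ p.2 ≤ q.2) ↔
        bruhatLE cs (f p).val (f q).val) :=
  bruhat_interval_iso_product_general cs u w s hu hw hus
end
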